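/- arXiv:2309.00247 — 8 statements merged into one kernel-verified Lean document; each statement's English description precedes it below -/
import Mathlib

section
/- Let G be a finite nilpotent group whose order is divisible by at least three distinct primes. Then the power graph P(G) contains an induced path on 5 vertices. -/
def powerGraph (G : Type*) [Group G] : SimpleGraph G where
  Adj u v := u ≠ v ∧ (u ∈ Subgroup.zpowers v ∨ v ∈ Subgroup.zpowers u)
  symm := by
    constructor
    rintro u v ⟨h1, h2⟩
    exact ⟨h1.symm, h2.symm⟩
  loopless := by
    constructor
    rintro v ⟨h1, _⟩
    exact h1 rfl

/-- `Γ` contains an induced path on 5 vertices. -/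
def HasInducedP5 {V : Type*} (Γ : SimpleGraph V) : Prop :=
  ∃ a b c d e : V,
    a ≠ b ∧ a ≠ c ∧ a ≠ d ∧ a ≠ e ∧ b ≠ c ∧ b ≠ d ∧ b ≠ e ∧ c ≠ d ∧ c ≠ e ∧ d ≠ e ∧
    Γ.Adj a b ∧ Γ.Adj b c ∧ Γ.Adj c d ∧ Γ.Adj d e ∧
    ¬Γ.Adj a c ∧ ¬Γ.Adj a d ∧ ¬Γ.Adj a e ∧ ¬Γ.Adj b d ∧ ¬Γ.Adj b e ∧ ¬Γ.Adj c e

/-- `Γ` contains an induced copy of `P₂ ∪ P₃`. -/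
def HasInducedP2UnionP3 {V : Type*} (Γ : SimpleGraph V) : Prop :=
  ∃ a b c d e : V,
    a ≠ b ∧ a ≠ c ∧ a ≠ d ∧ a ≠ e ∧ b ≠ c ∧ b ≠ d ∧ b ≠ e ∧ c ≠ d ∧ c ≠ e ∧ d ≠ e ∧
    Γ.Adj a b ∧ Γ.Adj c d ∧ Γ.Adj d e ∧
    ¬Γ.Adj a c ∧ ¬Γ.Adj a d ∧ ¬Γ.Adj a e ∧ ¬Γ.Adj b c ∧ ¬Γ.Adj b d ∧ ¬Γ.Adj b e ∧ ¬Γ.Adj c e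

/-- `Γ` contains an induced diamond (`K₄` minus an edge). -/
def HasInducedDiamond {V : Type*} (Γ : SimpleGraph V) : Prop :=
  ∃ a b c d : V,
    a ≠ b ∧ a ≠ c ∧ a ≠ d ∧ b ≠ c ∧ b ≠ d ∧ c ≠ d ∧
    Γ.Adj a b ∧ Γ.Adj a c ∧ Γ.Adj b c ∧ Γ.Adj b d ∧ Γ.Adj c d ∧ ¬Γ.Adj a d

/-!
Pick elements `x`, `y`, `z` of orders `p`, `q`, `r` (Cauchy). In a finite nilpotent group the
Sylow subgroups are normal and centralize one another, so `x`, `y`, `z` commute pairwise, and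
a product of commuting elements of coprime orders generates both factors:
`x — xy — y — yz — z` is a path in the power graph. It is induced because the orders
`p, pq, q, qr, r` of its vertices divide one another only along the path.
-/

open Subgroup

theorem Nat.not_dvd_of_dvd_of_coprime {k m n : ℕ} (hk : k ≠ 1) (hkm : k ∣ m)
    (hkn : k.Coprime n) : ¬ m ∣ n :=
  fun hmn => hk (hkn.eq_one_of_dvd (hkm.trans hmn))

section

variable {G : Type*} [Group G]

theorem IsPGroup.commute_of_isNilpotent [Finite G] [Group.IsNilpotent G] {p q : ℕ}
    [Fact p.Prime] [Fact q.Prime] (hpq : p ≠ q) {H K : Subgroup G} (hH : IsPGroup p H)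
    (hK : IsPGroup q K) {x y : G} (hx : x ∈ H) (hy : y ∈ K) : Commute x y := by
  obtain ⟨P, hHP⟩ := hH.exists_le_sylow
  obtain ⟨Q, hKQ⟩ := hK.exists_le_sylow
  exact commute_of_normal_of_disjoint _ _ inferInstance inferInstance
    (IsPGroup.disjoint_of_ne p q hpq _ _ P.isPGroup' Q.isPGroup') x y (hHP hx) (hKQ hy)

theorem ne_of_not_orderOf_dvd {u v : G} (h : ¬ orderOf u ∣ orderOf v) : u ≠ v :=
  fun huv => h (huv ▸ dvd_rfl)

theorem powerGraph_not_adj_of_not_orderOf_dvd {u v : G} (huv : ¬ orderOf u ∣ orderOf v)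
    (hvu : ¬ orderOf v ∣ orderOf u) : ¬ (powerGraph G).Adj u v := by
  rintro ⟨-, h | h⟩
  · exact huv (orderOf_dvd_of_mem_zpowers h)
  · exact hvu (orderOf_dvd_of_mem_zpowers h)

theorem Commute.mem_zpowers_mul_of_coprime {x y : G} (h : Commute x y)
    (hco : (orderOf x).Coprime (orderOf y)) : x ∈ zpowers (x * y) := by
  obtain ⟨m, hm⟩ := exists_pow_eq_self_of_coprime hco.symm
  have hpow : (x * y) ^ (orderOf y * m) = x := by
    rw [h.mul_pow, pow_mul, pow_mul, pow_orderOf_eq_one, one_pow, mul_one, hm]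
  have hmem := npow_mem_zpowers (x * y) (orderOf y * m)
  rwa [hpow] at hmem

theorem Commute.powerGraph_adj_mul_left {x y : G} (h : Commute x y)
    (hco : (orderOf x).Coprime (orderOf y)) (hy : y ≠ 1) : (powerGraph G).Adj x (x * y) :=
  ⟨fun hx => hy (left_eq_mul.mp hx), .inl (h.mem_zpowers_mul_of_coprime hco)⟩

theorem Commute.powerGraph_adj_mul_right {x y : G} (h : Commute x y)
    (hco : (orderOf x).Coprime (orderOf y)) (hx : x ≠ 1) : (powerGraph G).Adj y (x * y) :=
  h.eq ▸ h.symm.powerGraph_adj_mul_left hco.symm hx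

open Nat in
theorem hasInducedP5_powerGraph_of_commute_of_coprime {x y z : G} (hxy : Commute x y)
    (hyz : Commute y z) (cxy : (orderOf x).Coprime (orderOf y))
    (cyz : (orderOf y).Coprime (orderOf z)) (cxz : (orderOf x).Coprime (orderOf z))
    (hx : x ≠ 1) (hy : y ≠ 1) (hz : z ≠ 1) : HasInducedP5 (powerGraph G) := by
  have adj_x_xy := hxy.powerGraph_adj_mul_left cxy hy
  have adj_y_xy := hxy.powerGraph_adj_mul_right cxy hx
  have adj_y_yz := hyz.powerGraph_adj_mul_left cyz hz
  have adj_z_yz := hyz.powerGraph_adj_mul_right cyz hy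
  have oxy := hxy.orderOf_mul_eq_mul_orderOf_of_coprime cxy
  have oyz := hyz.orderOf_mul_eq_mul_orderOf_of_coprime cyz
  set a := orderOf x
  set b := orderOf y
  set c := orderOf z
  have ha : a ≠ 1 := mt orderOf_eq_one_iff.mp hx
  have hb : b ≠ 1 := mt orderOf_eq_one_iff.mp hy
  have hc : c ≠ 1 := mt orderOf_eq_one_iff.mp hz
  have x_y : ¬ a ∣ b := not_dvd_of_dvd_of_coprime ha dvd_rfl cxy
  have y_x : ¬ b ∣ a := not_dvd_of_dvd_of_coprime hb dvd_rfl cxy.symm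
  have x_z : ¬ a ∣ c := not_dvd_of_dvd_of_coprime ha dvd_rfl cxz
  have z_x : ¬ c ∣ a := not_dvd_of_dvd_of_coprime hc dvd_rfl cxz.symm
  have y_z : ¬ b ∣ c := not_dvd_of_dvd_of_coprime hb dvd_rfl cyz
  have z_y : ¬ c ∣ b := not_dvd_of_dvd_of_coprime hc dvd_rfl cyz.symm
  have x_yz : ¬ a ∣ orderOf (y * z) :=
    oyz ▸ not_dvd_of_dvd_of_coprime ha dvd_rfl (cxy.mul_right cxz)
  have yz_x : ¬ orderOf (y * z) ∣ a :=
    oyz ▸ not_dvd_of_dvd_of_coprime hb (dvd_mul_right b c) cxy.symm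
  have xy_z : ¬ orderOf (x * y) ∣ c :=
    oxy ▸ not_dvd_of_dvd_of_coprime ha (dvd_mul_right a b) cxz
  have z_xy : ¬ c ∣ orderOf (x * y) :=
    oxy ▸ not_dvd_of_dvd_of_coprime hc dvd_rfl (cxz.symm.mul_right cyz.symm)
  have xy_yz : ¬ orderOf (x * y) ∣ orderOf (y * z) :=
    oxy ▸ oyz ▸ not_dvd_of_dvd_of_coprime ha (dvd_mul_right a b) (cxy.mul_right cxz)
  have yz_xy : ¬ orderOf (y * z) ∣ orderOf (x * y) :=
    oxy ▸ oyz ▸ not_dvd_of_dvd_of_coprime hc (dvd_mul_left c b) (cxz.symm.mul_right cyz.symm)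
  refine ⟨x, x * y, y, y * z, z, adj_x_xy.ne, ne_of_not_orderOf_dvd x_y,
    ne_of_not_orderOf_dvd x_yz, ne_of_not_orderOf_dvd x_z, adj_y_xy.ne.symm,
    ne_of_not_orderOf_dvd xy_yz, ne_of_not_orderOf_dvd xy_z, adj_y_yz.ne,
    ne_of_not_orderOf_dvd y_z, adj_z_yz.ne.symm,
    adj_x_xy, adj_y_xy.symm, adj_y_yz, adj_z_yz.symm, ?_, ?_, ?_, ?_, ?_, ?_⟩
  exacts [powerGraph_not_adj_of_not_orderOf_dvd x_y y_x,
    powerGraph_not_adj_of_not_orderOf_dvd x_yz yz_x,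
    powerGraph_not_adj_of_not_orderOf_dvd x_z z_x,
    powerGraph_not_adj_of_not_orderOf_dvd xy_yz yz_xy,
    powerGraph_not_adj_of_not_orderOf_dvd xy_z z_xy,
    powerGraph_not_adj_of_not_orderOf_dvd y_z z_y]

end

theorem nilpotent_three_primes_hasInducedP5 (G : Type*) [Group G] [Finite G]
    [Group.IsNilpotent G] (p q r : ℕ) (hp : p.Prime) (hq : q.Prime) (hr : r.Prime)
    (hpq : p ≠ q) (hpr : p ≠ r) (hqr : q ≠ r)
    (hdvd : p ∣ Nat.card G ∧ q ∣ Nat.card G ∧ r ∣ Nat.card G) :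
    HasInducedP5 (powerGraph G) := by
  have := Fact.mk hp
  have := Fact.mk hq
  have := Fact.mk hr
  obtain ⟨x, hx⟩ := exists_prime_orderOf_dvd_card' p hdvd.1
  obtain ⟨y, hy⟩ := exists_prime_orderOf_dvd_card' q hdvd.2.1
  obtain ⟨z, hz⟩ := exists_prime_orderOf_dvd_card' r hdvd.2.2
  have pgroup {s : ℕ} {g : G} (hg : orderOf g = s) : IsPGroup s (zpowers g) :=
    IsPGroup.of_card (n := 1) (by rw [Nat.card_zpowers, hg, pow_one])
  have ne_one {s : ℕ} {g : G} (hs : s.Prime) (hg : orderOf g = s) : g ≠ 1 :=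
    fun h => hs.ne_one (by rw [← hg, h, orderOf_one])
  refine hasInducedP5_powerGraph_of_commute_of_coprime
    ((pgroup hx).commute_of_isNilpotent hpq (pgroup hy) (mem_zpowers x) (mem_zpowers y))
    ((pgroup hy).commute_of_isNilpotent hqr (pgroup hz) (mem_zpowers y) (mem_zpowers z))
    ?_ ?_ ?_ (ne_one hp hx) (ne_one hq hy) (ne_one hr hz)
  · rw [hx, hy]; exact (Nat.coprime_primes hp hq).mpr hpq
  · rw [hy, hz]; exact (Nat.coprime_primes hq hr).mpr hqr
  · rw [hx, hz]; exact (Nat.coprime_primes hp hr).mpr hpr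
end

section
/- Let G be a finite nilpotent group of order p^a q^b with p, q distinct primes and a, b ≥ 1, whose Sylow p-subgroup is non-cyclic. Then the power graph P(G) contains an induced path on 5 vertices. -/
/-!
Let `P` be the Sylow `p`-subgroup. Since `P` is not cyclic, an element of maximal order does not
generate it, which yields `x, y ∈ P` neither of which is a power of the other. Take `z` of order
`q`; as `G` is nilpotent, `z` centralises `P`, so for `w ∈ P` the product `w z` has `w` and `z`
among its powers (coprime orders). A power `(w z)^k = w^k z^k` of such a product has uniquely
determined components in `P` and in a Sylow `q`-subgroup, so comparability of `x, y, x z, y z, z`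
in the power order can be read off componentwise, and `x — x z — z — y z — y` is an induced path.
-/

section PowerGraph

open Subgroup

variable {G : Type*} [Group G]

def ZpowersIncomparable (u v : G) : Prop :=
  u ∉ zpowers v ∧ v ∉ zpowers u

namespace ZpowersIncomparable

variable {u v : G}

theorem symm (h : ZpowersIncomparable u v) : ZpowersIncomparable v u :=
  ⟨h.2, h.1⟩

theorem ne (h : ZpowersIncomparable u v) : u ≠ v := by
  rintro rfl
  exact h.1 (mem_zpowers u)

theorem not_adj (h : ZpowersIncomparable u v) : ¬(powerGraph G).Adj u v :=
  fun hadj => hadj.2.elim h.1 h.2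

theorem ne_one_left (h : ZpowersIncomparable u v) : u ≠ 1 := by
  rintro rfl
  exact h.1 (one_mem _)

theorem of_disjoint {H K : Subgroup G} (hHK : Disjoint H K) (hu : u ∈ H) (hv : v ∈ K)
    (hu1 : u ≠ 1) (hv1 : v ≠ 1) : ZpowersIncomparable u v :=
  ⟨fun h => hu1 (disjoint_def.mp hHK hu (zpowers_le.2 hv h)),
    fun h => hv1 (disjoint_def.mp hHK (zpowers_le.2 hu h) hv)⟩

end ZpowersIncomparable

theorem hasInducedP5_powerGraph {a b c d e : G}
    (hab : (powerGraph G).Adj a b) (hbc : (powerGraph G).Adj b c)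
    (hcd : (powerGraph G).Adj c d) (hde : (powerGraph G).Adj d e)
    (hac : ZpowersIncomparable a c) (had : ZpowersIncomparable a d)
    (hae : ZpowersIncomparable a e) (hbd : ZpowersIncomparable b d)
    (hbe : ZpowersIncomparable b e) (hce : ZpowersIncomparable c e) :
    HasInducedP5 (powerGraph G) :=
  ⟨a, b, c, d, e, hab.ne, hac.ne, had.ne, hae.ne, hbc.ne, hbd.ne, hbe.ne, hcd.ne, hce.ne,
    hde.ne, hab, hbc, hcd, hde, hac.not_adj, had.not_adj, hae.not_adj, hbd.not_adj,
    hbe.not_adj, hce.not_adj⟩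

theorem exists_zpowersIncomparable_of_not_isCyclic [Finite G] (h : ¬IsCyclic G) :
    ∃ x y : G, ZpowersIncomparable x y := by
  by_contra! hcomp
  obtain ⟨g, hg⟩ := Finite.exists_max (orderOf : G → ℕ)
  refine h ⟨g, fun y => ?_⟩
  by_cases hy : y ∈ zpowers g
  · exact hy
  -- otherwise `g ∈ zpowers y`, and maximality of `orderOf g` forces `zpowers g = zpowers y`
  have hgy : g ∈ zpowers y := by
    by_contra hgy
    exact hcomp y g ⟨hy, hgy⟩
  have horder : orderOf y = orderOf g :=
    le_antisymm (hg y) (Nat.le_of_dvd (orderOf_pos y) (orderOf_dvd_of_mem_zpowers hgy))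
  have hzpowers : zpowers g = zpowers y :=
    eq_of_le_of_card_ge (zpowers_le.2 hgy) (by rw [Nat.card_zpowers, Nat.card_zpowers, horder])
  exact (hzpowers ▸ mem_zpowers y : y ∈ zpowers g)

theorem Subgroup.coe_mem_zpowers_coe_iff {H : Subgroup G} {a b : H} :
    (a : G) ∈ zpowers (b : G) ↔ a ∈ zpowers b := by
  simp only [mem_zpowers_iff, ← coe_zpow, Subtype.ext_iff]

theorem Subgroup.exists_zpowersIncomparable_of_not_isCyclic {H : Subgroup G} [Finite H]
    (h : ¬IsCyclic H) : ∃ x ∈ H, ∃ y ∈ H, ZpowersIncomparable x y := by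
  obtain ⟨x, y, hxy, hyx⟩ := _root_.exists_zpowersIncomparable_of_not_isCyclic h
  exact ⟨x, x.2, y, y.2, by rwa [coe_mem_zpowers_coe_iff], by rwa [coe_mem_zpowers_coe_iff]⟩

theorem Commute.mem_zpowers_mul_left {x z : G} (h : Commute x z)
    (hco : (orderOf x).Coprime (orderOf z)) : x ∈ zpowers (x * z) := by
  obtain ⟨m, hm⟩ := exists_pow_eq_self_of_coprime hco.symm
  have hpow : (x * z) ^ (orderOf z * m) = x := by
    rw [pow_mul, h.mul_pow, pow_orderOf_eq_one, mul_one, hm]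
  exact mem_zpowers_iff.2 ⟨_, by rwa [zpow_natCast]⟩

theorem Commute.mem_zpowers_mul_right {x z : G} (h : Commute x z)
    (hco : (orderOf x).Coprime (orderOf z)) : z ∈ zpowers (x * z) :=
  h.eq ▸ h.symm.mem_zpowers_mul_left hco.symm

section Disjoint

variable {H K : Subgroup G} {a b c d : G}

theorem mem_zpowers_of_mul_mem_zpowers_mul (hHK : Disjoint H K) (ha : a ∈ H) (hb : b ∈ H)
    (hc : c ∈ K) (hd : d ∈ K) (hbd : Commute b d) (h : a * c ∈ zpowers (b * d)) :
    a ∈ zpowers b := by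
  obtain ⟨k, hk⟩ := mem_zpowers_iff.1 h
  rw [hbd.mul_zpow] at hk
  have hfactors := mul_injective_of_disjoint hHK
    (a₁ := (⟨b ^ k, zpow_mem hb k⟩, ⟨d ^ k, zpow_mem hd k⟩)) (a₂ := (⟨a, ha⟩, ⟨c, hc⟩)) hk
  exact ⟨k, congrArg (fun g : H × K => (g.1 : G)) hfactors⟩

theorem ZpowersIncomparable.mul_mul (hHK : Disjoint H K) (ha : a ∈ H) (hb : b ∈ H)
    (hc : c ∈ K) (hd : d ∈ K) (hac : Commute a c) (hbd : Commute b d)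
    (hab : ZpowersIncomparable a b) : ZpowersIncomparable (a * c) (b * d) :=
  ⟨fun h => hab.1 (mem_zpowers_of_mul_mem_zpowers_mul hHK ha hb hc hd hbd h),
    fun h => hab.2 (mem_zpowers_of_mul_mem_zpowers_mul hHK hb ha hd hc hac h)⟩

/-- The induced path is `x — x z — z — y z — y`. -/
theorem hasInducedP5_powerGraph_of_disjoint {x y z : G} (hHK : Disjoint H K)
    (hx : x ∈ H) (hy : y ∈ H) (hz : z ∈ K) (hxy : ZpowersIncomparable x y) (hz1 : z ≠ 1)
    (hxz : Commute x z) (hyz : Commute y z) (hcx : (orderOf x).Coprime (orderOf z))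
    (hcy : (orderOf y).Coprime (orderOf z)) : HasInducedP5 (powerGraph G) := by
  have hx1 := hxy.ne_one_left
  have hy1 := hxy.symm.ne_one_left
  have h1 := one_mem K
  refine hasInducedP5_powerGraph (b := x * z) (c := z) (d := y * z) ?_ ?_ ?_ ?_
    (.of_disjoint hHK hx hz hx1 hz1) ?_ hxy ?_ ?_ (.symm (.of_disjoint hHK hy hz hy1 hz1))
  · exact ⟨by simpa using hz1, .inl (hxz.mem_zpowers_mul_left hcx)⟩
  · exact ⟨by simpa using hx1, .inr (hxz.mem_zpowers_mul_right hcx)⟩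
  · exact ⟨by simpa [eq_comm] using hy1, .inl (hyz.mem_zpowers_mul_right hcy)⟩
  · exact ⟨by simpa [eq_comm] using hz1, .inr (hyz.mem_zpowers_mul_left hcy)⟩
  · simpa using hxy.mul_mul hHK hx hy h1 hz (.one_right x) hyz
  · exact hxy.mul_mul hHK hx hy hz hz hxz hyz
  · simpa using hxy.mul_mul hHK hx hy hz h1 hxz (.one_right y)

end Disjoint

end PowerGraph

theorem nilpotent_noncyclic_sylow_hasInducedP5_general (G : Type*) [Group G] [Finite G]
    [Group.IsNilpotent G] (p q a b : ℕ) (hp : p.Prime) (hq : q.Prime) (hpq : p ≠ q)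
    (hb : 1 ≤ b) (hcard : Nat.card G = p ^ a * q ^ b)
    (hnc : ∀ P : Sylow p G, ¬ IsCyclic ↥(P : Subgroup G)) :
    HasInducedP5 (powerGraph G) := by
  have := Fact.mk hp
  have := Fact.mk hq
  obtain ⟨P⟩ := (inferInstance : Nonempty (Sylow p G))
  obtain ⟨x, hx, y, hy, hxy⟩ := Subgroup.exists_zpowersIncomparable_of_not_isCyclic (hnc P)
  obtain ⟨z, hz⟩ := exists_prime_orderOf_dvd_card' q
    (hcard ▸ (dvd_pow_self q (by omega)).mul_left _)
  have hz1 : z ≠ 1 := fun h => hq.ne_one (hz ▸ orderOf_eq_one_iff.2 h)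
  obtain ⟨Q, hzQ⟩ := (IsPGroup.of_card (p := q) (G := Subgroup.zpowers z) (n := 1)
    (by rw [Nat.card_zpowers, hz, pow_one])).exists_le_sylow
  replace hzQ : z ∈ (Q : Subgroup G) := hzQ (Subgroup.mem_zpowers z)
  have hPQ := IsPGroup.disjoint_of_ne p q hpq _ _ P.isPGroup' Q.isPGroup'
  have hcommute : ∀ w ∈ (P : Subgroup G), Commute w z := fun w hw =>
    Subgroup.commute_of_normal_of_disjoint _ _ inferInstance inferInstance hPQ w z hw hzQ
  have hcoprime : ∀ w ∈ (P : Subgroup G), (orderOf w).Coprime (orderOf z) := fun w hw => by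
    rw [hz, ← Subgroup.orderOf_mk w hw]
    exact P.isPGroup'.orderOf_coprime ((Nat.coprime_primes hp hq).mpr hpq) _
  exact hasInducedP5_powerGraph_of_disjoint hPQ hx hy hzQ hxy hz1 (hcommute x hx)
    (hcommute y hy) (hcoprime x hx) (hcoprime y hy)

theorem nilpotent_noncyclic_sylow_hasInducedP5 (G : Type*) [Group G] [Finite G]
    [Group.IsNilpotent G] (p q a b : ℕ) (hp : p.Prime) (hq : q.Prime) (hpq : p ≠ q)
    (ha : 1 ≤ a) (hb : 1 ≤ b) (hcard : Nat.card G = p ^ a * q ^ b)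
    (hnc : ∀ P : Sylow p G, ¬ IsCyclic ↥(P : Subgroup G)) :
    HasInducedP5 (powerGraph G) :=
  nilpotent_noncyclic_sylow_hasInducedP5_general G p q a b hp hq hpq hb hcard hnc
end

section
/- Let p, q be distinct primes and a, b ≥ 2. The power graph of the cyclic group C_{p^a q^b} contains an induced path on 5 vertices. -/
/-! If `g` has order `n`, then `g ^ (n / d)` is a power of `g ^ (n / e)` exactly when `d ∣ e`, so
`d ↦ g ^ (n / d)` embeds the comparability graph of the divisors of `n` into the power graph as an
induced subgraph. For `n = p ^ a * q ^ b` the divisors ordered by divisibility form the grid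
`[0, a] × [0, b]`, where `(2, 0), (2, 1), (1, 1), (1, 2), (0, 2)` is an induced path. -/

theorem HasInducedP5.map {V W : Type*} {Γ : SimpleGraph V} {Γ' : SimpleGraph W} (f : Γ ↪g Γ')
    (h : HasInducedP5 Γ) : HasInducedP5 Γ' := by
  obtain ⟨v₁, v₂, v₃, v₄, v₅, h⟩ := h
  exact ⟨f v₁, f v₂, f v₃, f v₄, f v₅, by simpa only [f.map_adj_iff, f.injective.ne_iff] using h⟩

def SimpleGraph.Embedding.fromRel {α β : Type*} {r : α → α → Prop} {s : β → β → Prop}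
    (f : α ↪ β) (hf : ∀ x y, s (f x) (f y) ↔ r x y) :
    SimpleGraph.fromRel r ↪g SimpleGraph.fromRel s where
  toEmbedding := f
  map_rel_iff' := by simp only [SimpleGraph.fromRel_adj, hf, f.injective.ne_iff, implies_true]

def divisorGraph (n : ℕ) : SimpleGraph {d : ℕ // d ∣ n} :=
  SimpleGraph.fromRel fun d e => (d : ℕ) ∣ e

section PowerGraph

variable {G : Type*} [Group G] {g : G} {n : ℕ}

theorem pow_div_mem_zpowers_pow_div_iff (hg : orderOf g = n) (hn : n ≠ 0) {d e : ℕ}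
    (hd : d ∣ n) (he : e ∣ n) : g ^ (n / d) ∈ Subgroup.zpowers (g ^ (n / e)) ↔ d ∣ e := by
  subst hg
  constructor
  · intro h
    simpa only [orderOf_pow_orderOf_div hn hd, orderOf_pow_orderOf_div hn he]
      using orderOf_dvd_of_mem_zpowers h
  · rintro ⟨k, rfl⟩
    have hk : k ∣ orderOf g / d := Nat.dvd_div_of_mul_dvd he
    rw [← Nat.div_mul_cancel hk, Nat.div_div_eq_div_mul, pow_mul]
    exact Subgroup.pow_mem _ (Subgroup.mem_zpowers _) k

def divisorGraphToPowerGraph (g : G) (hg : orderOf g = n) (hn : n ≠ 0) :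
    divisorGraph n ↪g powerGraph G :=
  -- `powerGraph G` is by definition `SimpleGraph.fromRel fun u v => u ∈ Subgroup.zpowers v`.
  SimpleGraph.Embedding.fromRel
    ⟨fun d => g ^ (n / (d : ℕ)), fun d e hde => Subtype.ext <| by
      subst hg
      simpa only [orderOf_pow_orderOf_div hn d.2, orderOf_pow_orderOf_div hn e.2]
        using congrArg orderOf hde⟩
    fun d e => pow_div_mem_zpowers_pow_div_iff hg hn d.2 e.2

end PowerGraph

theorem pow_mul_pow_dvd_pow_mul_pow_iff {p q : ℕ} (hp : p.Prime) (hq : q.Prime) (hpq : p ≠ q)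
    {i j k l : ℕ} : p ^ i * q ^ j ∣ p ^ k * q ^ l ↔ i ≤ k ∧ j ≤ l := by
  have hco : Nat.Coprime p q := (Nat.coprime_primes hp hq).mpr hpq
  refine ⟨fun h => ⟨?_, ?_⟩, fun ⟨hik, hjl⟩ => mul_dvd_mul (pow_dvd_pow p hik) (pow_dvd_pow q hjl)⟩
  · have h' : p ^ i ∣ p ^ k * q ^ l := (dvd_mul_right _ _).trans h
    rwa [(Nat.Coprime.pow i l hco).dvd_mul_right, Nat.pow_dvd_pow_iff_le_right hp.one_lt] at h'
  · have h' : q ^ j ∣ p ^ k * q ^ l := (dvd_mul_left _ _).trans h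
    rwa [(Nat.Coprime.pow j k hco.symm).dvd_mul_left, Nat.pow_dvd_pow_iff_le_right hq.one_lt] at h'

def gridToDivisorGraph {p q : ℕ} (hp : p.Prime) (hq : q.Prime) (hpq : p ≠ q) (a b : ℕ) :
    SimpleGraph.fromRel (· ≤ · : Fin (a + 1) × Fin (b + 1) → _ → Prop) ↪g
      divisorGraph (p ^ a * q ^ b) :=
  have hf : ∀ x y : Fin (a + 1) × Fin (b + 1),
      p ^ (x.1 : ℕ) * q ^ (x.2 : ℕ) ∣ p ^ (y.1 : ℕ) * q ^ (y.2 : ℕ) ↔ x ≤ y := fun x y => by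
    rw [pow_mul_pow_dvd_pow_mul_pow_iff hp hq hpq, Prod.le_def, Fin.le_def, Fin.le_def]
  SimpleGraph.Embedding.fromRel
    ⟨fun x => ⟨p ^ (x.1 : ℕ) * q ^ (x.2 : ℕ), (pow_mul_pow_dvd_pow_mul_pow_iff hp hq hpq).2
        ⟨Nat.lt_succ_iff.1 x.1.2, Nat.lt_succ_iff.1 x.2.2⟩⟩,
      fun x y hxy => le_antisymm ((hf x y).1 (congrArg Subtype.val hxy).dvd)
        ((hf y x).1 (congrArg Subtype.val hxy).symm.dvd)⟩
    fun x y => hf x y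

theorem hasInducedP5_grid {a b : ℕ} (ha : 2 ≤ a) (hb : 2 ≤ b) :
    HasInducedP5 (SimpleGraph.fromRel (· ≤ · : Fin (a + 1) × Fin (b + 1) → _ → Prop)) := by
  let v (i j : ℕ) (hi : i ≤ 2 := by omega) (hj : j ≤ 2 := by omega) : Fin (a + 1) × Fin (b + 1) :=
    (⟨i, by omega⟩, ⟨j, by omega⟩)
  refine ⟨v 2 0, v 2 1, v 1 1, v 1 2, v 0 2, ?_⟩
  simp only [v, SimpleGraph.fromRel_adj, ne_eq, Prod.mk.injEq, Prod.mk_le_mk, Fin.mk.injEq,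
    Fin.mk_le_mk]
  norm_num

theorem cyclic_paqb_hasInducedP5_general (G : Type*) [Group G] [IsCyclic G]
    (p q a b : ℕ) (hp : p.Prime) (hq : q.Prime) (hpq : p ≠ q)
    (ha : 2 ≤ a) (hb : 2 ≤ b) (hcard : Nat.card G = p ^ a * q ^ b) :
    HasInducedP5 (powerGraph G) := by
  obtain ⟨g, hg⟩ := IsCyclic.exists_ofOrder_eq_natCard (α := G)
  have hn : p ^ a * q ^ b ≠ 0 := by simp [hp.ne_zero, hq.ne_zero]
  exact ((hasInducedP5_grid ha hb).map (gridToDivisorGraph hp hq hpq a b)).map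
    (divisorGraphToPowerGraph g (hg.trans hcard) hn)

theorem cyclic_paqb_hasInducedP5 (G : Type*) [Group G] [Finite G] [IsCyclic G]
    (p q a b : ℕ) (hp : p.Prime) (hq : q.Prime) (hpq : p ≠ q)
    (ha : 2 ≤ a) (hb : 2 ≤ b) (hcard : Nat.card G = p ^ a * q ^ b) :
    HasInducedP5 (powerGraph G) :=
  cyclic_paqb_hasInducedP5_general G p q a b hp hq hpq ha hb hcard
end

section
/- Let p, q be distinct primes and a ≥ 1. Then the power graph of the cyclic group C_{p^a q} contains no induced path on 5 vertices and no induced complement of a path on 5 vertices. -/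
/-!
In a finite cyclic group `u` is a power of `v` exactly when `orderOf u ∣ orderOf v`, so the power
graph is the comparability graph of the divisibility order pulled back along `orderOf`. For the
divisors of `p ^ a * q` this order is the product order on the exponent pairs
`(νₚ, ν_q) ∈ ℕ × {0, 1}`, and a comparability graph of `ℕ × {0, 1}` contains neither an induced
`P₅` nor an induced complement of `P₅`.
-/

open Subgroup

theorem not_hasInducedP5_and_not_hasInducedP5_compl_of_adj_iff {V : Type*} (Γ : SimpleGraph V)
    (f : V → ℕ × ℕ) (hf : ∀ v, (f v).2 ≤ 1)
    (hΓ : ∀ u v, Γ.Adj u v ↔ u ≠ v ∧ (f u ≤ f v ∨ f v ≤ f u)) :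
    ¬ HasInducedP5 Γ ∧ ¬ HasInducedP5 Γᶜ := by
  constructor
  all_goals
    rintro ⟨u, v, w, x, y, h₁, h₂, h₃, h₄, h₅, h₆, h₇, h₈, h₉, h₁₀, h⟩
    simp only [SimpleGraph.compl_adj, hΓ, Prod.le_def, ne_eq, h₁, h₂, h₃, h₄, h₅, h₆, h₇, h₈,
      h₉, h₁₀, not_false_eq_true, true_and, not_not] at h
    have := hf u; have := hf v; have := hf w; have := hf x; have := hf y
    omega

theorem IsCyclic.mem_zpowers_iff_orderOf_dvd {G : Type*} [Group G] [Finite G] [IsCyclic G]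
    {u v : G} : u ∈ zpowers v ↔ orderOf u ∣ orderOf v := by
  refine ⟨orderOf_dvd_of_mem_zpowers, fun h => ?_⟩
  classical
  have : Fintype G := Fintype.ofFinite G
  -- `zpowers v` has `orderOf v` elements, all solving `x ^ orderOf v = 1`, which has at most
  -- `orderOf v` solutions in a cyclic group.
  have hsub : (zpowers v : Set G).toFinset ⊆ ({x | x ^ orderOf v = 1} : Finset G) :=
    fun x hx => by
      simpa using orderOf_dvd_iff_pow_eq_one.mp (orderOf_dvd_of_mem_zpowers (by simpa using hx))
  have heq := Finset.eq_of_subset_of_card_le hsub <| by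
    simpa [Fintype.card_zpowers] using IsCyclic.card_pow_eq_one_le (α := G) (orderOf_pos v)
  have hu : u ∈ ({x | x ^ orderOf v = 1} : Finset G) := by
    simpa using orderOf_dvd_iff_pow_eq_one.mp h
  simpa [← heq] using hu

theorem powerGraph_adj_iff_orderOf_dvd {G : Type*} [Group G] [Finite G] [IsCyclic G] {u v : G} :
    (powerGraph G).Adj u v ↔ u ≠ v ∧ (orderOf u ∣ orderOf v ∨ orderOf v ∣ orderOf u) := by
  simp only [powerGraph, IsCyclic.mem_zpowers_iff_orderOf_dvd]

theorem Nat.dvd_iff_forall_factorization_le {m n : ℕ} {s : Finset ℕ} (hm : m ≠ 0) (hn : n ≠ 0)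
    (hs : m.primeFactors ⊆ s) : m ∣ n ↔ ∀ r ∈ s, m.factorization r ≤ n.factorization r := by
  rw [← Nat.factorization_le_iff_dvd hm hn]
  refine ⟨fun h r _ => h r, fun h r => ?_⟩
  by_cases hr : r ∈ s
  · exact h r hr
  · rw [Finsupp.notMem_support_iff.mp fun hr' => hr (hs (by simpa using hr'))]
    exact Nat.zero_le _

theorem Nat.primeFactors_pow_mul_subset {p q : ℕ} (a : ℕ) (hp : p.Prime) (hq : q.Prime) :
    (p ^ a * q).primeFactors ⊆ {p, q} := fun r hr => by
  have hr' := Nat.prime_of_mem_primeFactors hr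
  rcases hr'.dvd_mul.mp (Nat.dvd_of_mem_primeFactors hr) with h | h
  · simp [(Nat.prime_dvd_prime_iff_eq hr' hp).mp (hr'.dvd_of_dvd_pow h)]
  · simp [(Nat.prime_dvd_prime_iff_eq hr' hq).mp h]

theorem cyclic_paq_p5_free_general (G : Type*) [Group G] [Finite G] [IsCyclic G]
    (p q a : ℕ) (hp : p.Prime) (hq : q.Prime) (hpq : p ≠ q)
    (hcard : Nat.card G = p ^ a * q) :
    ¬ HasInducedP5 (powerGraph G) ∧ ¬ HasInducedP5 (powerGraph G)ᶜ := by
  have hN : p ^ a * q ≠ 0 := mul_ne_zero (pow_ne_zero a hp.ne_zero) hq.ne_zero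
  have hdvd (x : G) : orderOf x ∣ p ^ a * q := hcard ▸ orderOf_dvd_natCard x
  have hq_le (x : G) : (orderOf x).factorization q ≤ 1 := by
    have := (Nat.factorization_le_iff_dvd (orderOf_pos x).ne' hN).mpr (hdvd x) q
    simpa [Nat.factorization_mul (pow_ne_zero a hp.ne_zero) hq.ne_zero, hp.factorization_pow,
      hq.factorization, hpq] using this
  have hdvd_iff (x y : G) : orderOf x ∣ orderOf y ↔
      ((orderOf x).factorization p, (orderOf x).factorization q) ≤
        ((orderOf y).factorization p, (orderOf y).factorization q) := by
    rw [Nat.dvd_iff_forall_factorization_le (orderOf_pos x).ne' (orderOf_pos y).ne'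
      ((Nat.primeFactors_mono (hdvd x) hN).trans (Nat.primeFactors_pow_mul_subset a hp hq))]
    simp [Prod.le_def]
  exact not_hasInducedP5_and_not_hasInducedP5_compl_of_adj_iff _ _ hq_le fun u v => by
    rw [powerGraph_adj_iff_orderOf_dvd, hdvd_iff, hdvd_iff]

theorem cyclic_paq_p5_free (G : Type*) [Group G] [Finite G] [IsCyclic G]
    (p q a : ℕ) (hp : p.Prime) (hq : q.Prime) (hpq : p ≠ q)
    (ha : 1 ≤ a) (hcard : Nat.card G = p ^ a * q) :
    ¬ HasInducedP5 (powerGraph G) ∧ ¬ HasInducedP5 (powerGraph G)ᶜ :=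
  cyclic_paq_p5_free_general G p q a hp hq hpq hcard
end

section
/- Let G be a finite group containing two distinct elements of order pq for distinct primes p and q. Then the power graph P(G) contains an induced diamond (K₄ minus an edge). -/
/-!
If `g` has order `m * n` with neither of `m`, `n` dividing the other, then
`g ^ m — g — g⁻¹ — g ^ n` together with the chord `g — g⁻¹` is an induced diamond:
`g ^ m` and `g ^ n` are powers of both generators `g` and `g⁻¹` of `⟨g⟩`, while their
orders `n` and `m` do not divide each other, so neither is a power of the other.
-/

section PowerGraph

variable {G : Type*} [Group G]

theorem powerGraph_adj_of_mem_zpowers {u v : G} (hne : u ≠ v) (h : u ∈ Subgroup.zpowers v) :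
    (powerGraph G).Adj u v :=
  ⟨hne, Or.inl h⟩

theorem not_powerGraph_adj_of_not_dvd_orderOf {u v : G} (huv : ¬orderOf u ∣ orderOf v)
    (hvu : ¬orderOf v ∣ orderOf u) : ¬(powerGraph G).Adj u v := by
  rintro ⟨-, h | h⟩
  exacts [huv (orderOf_dvd_of_mem_zpowers h), hvu (orderOf_dvd_of_mem_zpowers h)]

theorem ne_inv_of_not_orderOf_dvd_two {g : G} (h : ¬orderOf g ∣ 2) : g ≠ g⁻¹ := by
  intro hg
  refine h (orderOf_dvd_of_pow_eq_one ?_)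
  rw [pow_two, ← mul_inv_cancel g, ← hg]

theorem orderOf_pow_of_orderOf_eq_mul {g : G} {m n : ℕ} (hg : orderOf g = m * n) (hm : 0 < m) :
    orderOf (g ^ m) = n := by
  rw [orderOf_pow_of_dvd hm.ne' (hg ▸ dvd_mul_right m n), hg, Nat.mul_div_cancel_left n hm]

theorem hasInducedDiamond_powerGraph_of_orderOf_eq_mul {g : G} {m n : ℕ}
    (hg : orderOf g = m * n) (hmn : ¬m ∣ n) (hnm : ¬n ∣ m) :
    HasInducedDiamond (powerGraph G) := by
  have hm : 2 ≤ m := by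
    by_contra! h
    interval_cases m
    exacts [hnm (dvd_zero n), hmn (one_dvd n)]
  have hn : 2 ≤ n := by
    by_contra! h
    interval_cases n
    exacts [hmn (dvd_zero m), hnm (one_dvd m)]
  have hgm : orderOf (g ^ m) = n := orderOf_pow_of_orderOf_eq_mul hg (by omega)
  have hgn : orderOf (g ^ n) = m := orderOf_pow_of_orderOf_eq_mul (hg.trans (mul_comm m n))
    (by omega)
  have hginv : orderOf g⁻¹ = m * n := by rw [orderOf_inv, hg]
  have hmn_lt : m < m * n ∧ n < m * n := ⟨by nlinarith, by nlinarith⟩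
  have hg_inv : g ≠ g⁻¹ := ne_inv_of_not_orderOf_dvd_two fun h => by
    have := Nat.le_of_dvd two_pos h
    nlinarith
  have hgm_g : g ^ m ≠ g := ne_of_apply_ne orderOf (by omega)
  have hgm_ginv : g ^ m ≠ g⁻¹ := ne_of_apply_ne orderOf (by omega)
  have hgm_gn : g ^ m ≠ g ^ n := ne_of_apply_ne orderOf fun h => hmn (by rw [hgm, hgn] at h; rw [h])
  have hg_gn : g ≠ g ^ n := ne_of_apply_ne orderOf (by omega)
  have hginv_gn : g⁻¹ ≠ g ^ n := ne_of_apply_ne orderOf (by omega)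
  refine ⟨g ^ m, g, g⁻¹, g ^ n, hgm_g, hgm_ginv, hgm_gn, hg_inv, hg_gn, hginv_gn,
    powerGraph_adj_of_mem_zpowers hgm_g (Subgroup.npow_mem_zpowers g m),
    powerGraph_adj_of_mem_zpowers hgm_ginv ?_,
    powerGraph_adj_of_mem_zpowers hg_inv ?_,
    (powerGraph_adj_of_mem_zpowers hg_gn.symm (Subgroup.npow_mem_zpowers g n)).symm,
    (powerGraph_adj_of_mem_zpowers hginv_gn.symm ?_).symm,
    not_powerGraph_adj_of_not_dvd_orderOf (by rwa [hgm, hgn]) (by rwa [hgm, hgn])⟩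
  all_goals rw [Subgroup.zpowers_inv]
  exacts [Subgroup.npow_mem_zpowers g m, Subgroup.mem_zpowers g, Subgroup.npow_mem_zpowers g n]

end PowerGraph

theorem two_elements_order_pq_diamond_general (G : Type*) [Group G]
    (p q : ℕ) (hp : p.Prime) (hq : q.Prime) (hpq : p ≠ q)
    (x : G) (hx : orderOf x = p * q) :
    HasInducedDiamond (powerGraph G) :=
  hasInducedDiamond_powerGraph_of_orderOf_eq_mul hx
    (mt (Nat.prime_dvd_prime_iff_eq hp hq).mp hpq)
    (mt (Nat.prime_dvd_prime_iff_eq hq hp).mp hpq.symm)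

theorem two_elements_order_pq_diamond (G : Type*) [Group G] [Finite G]
    (p q : ℕ) (hp : p.Prime) (hq : q.Prime) (hpq : p ≠ q)
    (x y : G) (hxy : x ≠ y) (hx : orderOf x = p * q) (hy : orderOf y = p * q) :
    HasInducedDiamond (powerGraph G) :=
  two_elements_order_pq_diamond_general G p q hp hq hpq x hx
end

section
/- Let G be an EPPO group. Then the power graph P(G) is chordal; in particular it contains no induced cycle of even length at least 4. -/
/-!
Take a vertex `v` of maximal order on an induced cycle of length at least four. A neighbour `u`
of `v` on the cycle cannot properly contain `v` among its powers, since `⟨v⟩ ≤ ⟨u⟩` together with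
`|u| ≤ |v|` forces `⟨u⟩ = ⟨v⟩`; so both cycle neighbours of `v` lie in `⟨v⟩`. The vertex `v` is
not `1`, which is adjacent to everything, so in an EPPO group `⟨v⟩` is a cyclic `p`-group, whose
subgroups form a chain. Hence the two neighbours of `v` are adjacent, a chord of the cycle.
-/

open Subgroup

section ZPowers

variable {G : Type*} [Group G]

theorem zpowers_zpow_eq_zpowers_zpow_gcd (v : G) (a : ℤ) :
    zpowers (v ^ a) = zpowers (v ^ (a.gcd (orderOf v) : ℤ)) := by
  apply le_antisymm <;> rw [zpowers_le]
  · obtain ⟨c, hc⟩ := Int.gcd_dvd_left a (orderOf v)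
    exact mem_zpowers_iff.mpr ⟨c, by rw [← zpow_mul, ← hc]⟩
  · -- Bézout: `gcd(a, |v|) = a x + |v| y`, and `v ^ |v| = 1`.
    rw [Int.gcd_eq_gcd_ab, zpow_add, zpow_mul, zpow_mul, zpow_natCast, pow_orderOf_eq_one,
      one_zpow, mul_one]
    exact zpow_mem (mem_zpowers _) _

theorem zpow_mem_zpowers_zpow_of_gcd_dvd {v : G} {a b : ℤ}
    (h : a.gcd (orderOf v) ∣ b.gcd (orderOf v)) : v ^ b ∈ zpowers (v ^ a) := by
  rw [zpowers_zpow_eq_zpowers_zpow_gcd, ← zpowers_le,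
    zpowers_zpow_eq_zpowers_zpow_gcd v b, zpowers_le]
  obtain ⟨c, hc⟩ := h
  exact mem_zpowers_iff.mpr ⟨c, by rw [← zpow_mul, hc, Nat.cast_mul]⟩

theorem mem_zpowers_or_mem_zpowers_of_isPrimePow {v u w : G} (hv : IsPrimePow (orderOf v))
    (hu : u ∈ zpowers v) (hw : w ∈ zpowers v) : u ∈ zpowers w ∨ w ∈ zpowers u := by
  obtain ⟨a, rfl⟩ := hu
  obtain ⟨b, rfl⟩ := hw
  obtain ⟨p, k, hp, -, hpk⟩ := hv
  have gcd_dvd (c : ℤ) : c.gcd (orderOf v) ∣ p ^ k :=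
    hpk ▸ Int.gcd_dvd_right c (orderOf v) |> Int.natCast_dvd_natCast.mp
  obtain ⟨s, -, hs⟩ := (Nat.dvd_prime_pow hp.nat_prime).mp (gcd_dvd a)
  obtain ⟨t, -, ht⟩ := (Nat.dvd_prime_pow hp.nat_prime).mp (gcd_dvd b)
  rcases le_total s t with hst | hts
  · exact .inr (zpow_mem_zpowers_zpow_of_gcd_dvd (by rw [hs, ht]; exact pow_dvd_pow p hst))
  · exact .inl (zpow_mem_zpowers_zpow_of_gcd_dvd (by rw [hs, ht]; exact pow_dvd_pow p hts))

theorem mem_zpowers_of_mem_zpowers_of_orderOf_le [Finite G] {u v : G} (h : v ∈ zpowers u)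
    (hle : orderOf u ≤ orderOf v) : u ∈ zpowers v := by
  have : zpowers v = zpowers u :=
    eq_of_le_of_card_ge (zpowers_le.mpr h) (by rwa [Nat.card_zpowers, Nat.card_zpowers])
  exact this ▸ mem_zpowers u

end ZPowers

section PowerGraph

variable {G : Type*} [Group G]

theorem powerGraph_adj_one {v : G} (hv : v ≠ 1) : (powerGraph G).Adj 1 v :=
  ⟨hv.symm, .inl (one_mem _)⟩

theorem ne_one_of_not_powerGraph_adj {v w : G} (hwv : w ≠ v) (h : ¬(powerGraph G).Adj v w) :
    v ≠ 1 :=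
  fun hv => h (hv ▸ powerGraph_adj_one (hv ▸ hwv))

theorem powerGraph_adj_of_adj_of_orderOf_le [Finite G] {u v w : G}
    (hv : IsPrimePow (orderOf v)) (huv : (powerGraph G).Adj u v) (hwv : (powerGraph G).Adj w v)
    (hu : orderOf u ≤ orderOf v) (hw : orderOf w ≤ orderOf v) (huw : u ≠ w) :
    (powerGraph G).Adj u w := by
  have mem_of_adj {x : G} (hx : (powerGraph G).Adj x v) (hle : orderOf x ≤ orderOf v) :
      x ∈ zpowers v :=
    hx.2.elim id (mem_zpowers_of_mem_zpowers_of_orderOf_le · hle)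
  exact ⟨huw, mem_zpowers_or_mem_zpowers_of_isPrimePow hv (mem_of_adj huv hu) (mem_of_adj hwv hw)⟩

end PowerGraph

section InducedCycle

variable {V : Type*} {Γ : SimpleGraph V} {n : ℕ} {f : ZMod n → V}

theorem ZMod.natCast_ne_zero_of_lt {k : ℕ} (hk : k ≠ 0) (hkn : k < n) : (k : ZMod n) ≠ 0 := by
  rw [Ne, ZMod.natCast_eq_zero_iff]
  exact fun h => hk (Nat.eq_zero_of_dvd_of_lt h hkn)

theorem not_adj_sub_one_add_one_of_induced_cycle (hn : 4 ≤ n)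
    (hadj : ∀ i j : ZMod n, Γ.Adj (f i) (f j) ↔ (j = i + 1 ∨ i = j + 1)) (i : ZMod n) :
    ¬Γ.Adj (f (i - 1)) (f (i + 1)) := by
  have h1 : ((1 : ℕ) : ZMod n) ≠ 0 := ZMod.natCast_ne_zero_of_lt one_ne_zero (by omega)
  have h3 : ((3 : ℕ) : ZMod n) ≠ 0 := ZMod.natCast_ne_zero_of_lt three_ne_zero (by omega)
  push_cast at h1 h3
  rw [hadj]
  rintro (h | h)
  · exact h1 (by linear_combination h)
  · exact h3 (by linear_combination -h)

end InducedCycle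

theorem eppo_power_graph_chordal (G : Type*) [Group G] [Finite G]
    (hEPPO : ∀ x : G, x ≠ 1 → IsPrimePow (orderOf x)) :
    ¬ ∃ n : ℕ, 4 ≤ n ∧ ∃ f : ZMod n → G, Function.Injective f ∧
      ∀ i j : ZMod n, (powerGraph G).Adj (f i) (f j) ↔ (j = i + 1 ∨ i = j + 1) := by
  rintro ⟨n, hn, f, hf, hadj⟩
  have : NeZero n := ⟨by omega⟩
  have h2 : ((2 : ℕ) : ZMod n) ≠ 0 := ZMod.natCast_ne_zero_of_lt two_ne_zero (by omega)
  push_cast at h2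
  have hchord := not_adj_sub_one_add_one_of_induced_cycle hn hadj
  obtain ⟨i, hi⟩ := Finite.exists_max fun j => orderOf (f j)
  have hv : f i ≠ 1 :=
    ne_one_of_not_powerGraph_adj (w := f (i + 2)) (fun h => h2 (by linear_combination hf h))
      (by simpa only [add_sub_cancel_right, add_assoc, one_add_one_eq_two] using hchord (i + 1))
  have hprev : (powerGraph G).Adj (f (i - 1)) (f i) := (hadj _ _).mpr (.inl (by ring))
  have hnext : (powerGraph G).Adj (f (i + 1)) (f i) := (hadj _ _).mpr (.inr rfl)
  have hne : f (i - 1) ≠ f (i + 1) := fun h => h2 (by linear_combination -hf h)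
  exact hchord i <| powerGraph_adj_of_adj_of_orderOf_le (hEPPO _ hv) hprev hnext (hi _) (hi _) hne
end

section
/- Let G be a finite 3-group of exponent 3 with |G| > 3. Then the proper power graph P*(G) contains 2K₂ (two disjoint edges) as an induced subgraph; hence P*(G) is not a chain graph. -/
/-- The proper power graph: the power graph restricted to non-identity elements. -/
def properPowerGraph (G : Type*) [Group G] : SimpleGraph {x : G // x ≠ 1} :=
  SimpleGraph.induce {x : G | x ≠ 1} (powerGraph G)

/-!
If every non-identity element has order 3, two non-identity elements are adjacent in the power
graph exactly when they generate the same subgroup of order 3. So `P*(G)` is a disjoint union of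
the edges `{x, x⁻¹}`, one for each subgroup of order 3, and `|G| > 3` yields two such subgroups.
-/

open Subgroup

section

variable {G : Type*} [Group G]

theorem zpowers_eq_of_mem_of_orderOf_eq {x y : G} (hy : y ∈ zpowers x)
    (hord : orderOf y = orderOf x) (hx : orderOf x ≠ 0) : zpowers y = zpowers x := by
  have : Finite (zpowers x) := Nat.finite_of_card_ne_zero (by rwa [Nat.card_zpowers])
  exact eq_of_le_of_card_ge (zpowers_le.2 hy) (by rw [Nat.card_zpowers, Nat.card_zpowers, hord])

theorem powerGraph_adj_iff_of_orderOf_eq {u v : G} (hord : orderOf u = orderOf v)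
    (hv : orderOf v ≠ 0) :
    (powerGraph G).Adj u v ↔ u ≠ v ∧ zpowers u = zpowers v := by
  refine and_congr_right fun _ => ⟨?_, fun h => .inl (h ▸ mem_zpowers u)⟩
  rintro (h | h)
  · exact zpowers_eq_of_mem_of_orderOf_eq h hord hv
  · exact (zpowers_eq_of_mem_of_orderOf_eq h hord.symm (hord ▸ hv)).symm

theorem properPowerGraph_adj_iff {p : ℕ} (hp : p ≠ 0)
    (hexp : ∀ x : G, x ≠ 1 → orderOf x = p) {u v : {x : G // x ≠ 1}} :
    (properPowerGraph G).Adj u v ↔ u ≠ v ∧ zpowers u.1 = zpowers v.1 := by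
  rw [← Subtype.coe_ne_coe]
  exact (powerGraph_adj_iff_of_orderOf_eq (u := u.1) (v := v.1) (by rw [hexp _ u.2, hexp _ v.2])
    (hexp _ v.2 ▸ hp))

theorem inv_ne_self_of_two_lt_orderOf {x : G} (hx : 2 < orderOf x) : x⁻¹ ≠ x := fun h =>
  hx.not_ge <| Nat.le_of_dvd two_pos <|
    orderOf_dvd_of_pow_eq_one (by rw [sq, mul_eq_one_iff_eq_inv, h])

theorem exists_notMem_zpowers_of_orderOf_lt_card {x : G} (h : orderOf x < Nat.card G) :
    ∃ y, y ∉ zpowers x := by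
  by_contra! hall
  have := (zpowers x).eq_top_iff'.2 hall
  rw [← Nat.card_zpowers, this, card_top] at h
  exact h.false

end

theorem three_group_exponent_three_2K2_general (G : Type*) [Group G]
    (hexp : ∀ x : G, x ≠ 1 → orderOf x = 3)
    (hbig : 3 < Nat.card G) :
    ∃ a b c d : {x : G // x ≠ 1},
      a ≠ b ∧ a ≠ c ∧ a ≠ d ∧ b ≠ c ∧ b ≠ d ∧ c ≠ d ∧
      (properPowerGraph G).Adj a b ∧ (properPowerGraph G).Adj c d ∧
      ¬(properPowerGraph G).Adj a c ∧ ¬(properPowerGraph G).Adj a d ∧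
      ¬(properPowerGraph G).Adj b c ∧ ¬(properPowerGraph G).Adj b d := by
  have : Finite G := Nat.finite_of_card_ne_zero (by omega)
  have : Nontrivial G := Finite.one_lt_card_iff_nontrivial.mp (by omega)
  obtain ⟨x, hx⟩ := exists_ne (1 : G)
  obtain ⟨y, hy⟩ := exists_notMem_zpowers_of_orderOf_lt_card (x := x) (by rwa [hexp x hx])
  have hy1 : y ≠ 1 := fun h => hy (h ▸ one_mem _)
  have hxy : zpowers x ≠ zpowers y := fun h => hy (h ▸ mem_zpowers y)
  have hne {a b : G} (ha : zpowers a = zpowers x) (hb : zpowers b = zpowers y) : a ≠ b := by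
    rintro rfl
    exact hxy (ha.symm.trans hb)
  have hxx := inv_ne_self_of_two_lt_orderOf (by rw [hexp x hx]; decide)
  have hyy := inv_ne_self_of_two_lt_orderOf (by rw [hexp y hy1]; decide)
  refine ⟨⟨x, hx⟩, ⟨x⁻¹, inv_ne_one.2 hx⟩, ⟨y, hy1⟩, ⟨y⁻¹, inv_ne_one.2 hy1⟩, ?_⟩
  simp only [properPowerGraph_adj_iff three_ne_zero hexp, ne_eq, Subtype.mk.injEq, zpowers_inv,
    hxy, and_false, not_false_eq_true, and_true]
  exact ⟨hxx.symm, hne rfl rfl, hne rfl zpowers_inv, hne zpowers_inv rfl,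
    hne zpowers_inv zpowers_inv, hyy.symm, hxx.symm, hyy.symm⟩

theorem three_group_exponent_three_2K2 (G : Type*) [Group G] [Finite G]
    (n : ℕ) (hcard : Nat.card G = 3 ^ n) (hexp : ∀ x : G, x ≠ 1 → orderOf x = 3)
    (hbig : 3 < Nat.card G) :
    ∃ a b c d : {x : G // x ≠ 1},
      a ≠ b ∧ a ≠ c ∧ a ≠ d ∧ b ≠ c ∧ b ≠ d ∧ c ≠ d ∧
      (properPowerGraph G).Adj a b ∧ (properPowerGraph G).Adj c d ∧
      ¬(properPowerGraph G).Adj a c ∧ ¬(properPowerGraph G).Adj a d ∧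
      ¬(properPowerGraph G).Adj b c ∧ ¬(properPowerGraph G).Adj b d :=
  three_group_exponent_three_2K2_general G hexp hbig
end

section
/- Let G be a finite group with |G| divisible by distinct primes 2, q, r (2 < q < r), and suppose G contains an element x of order 2q. Then the power graph P(G) contains an induced subgraph isomorphic to P₂ ∪ P₃. -/
private lemma notAdj_of_orders {G : Type*} [Group G] {u v : G}
    (h1 : ¬ orderOf u ∣ orderOf v) (h2 : ¬ orderOf v ∣ orderOf u) :
    ¬ (powerGraph G).Adj u v := by
  rintro ⟨_, h | h⟩
  · exact h1 (orderOf_dvd_of_mem_zpowers h)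
  · exact h2 (orderOf_dvd_of_mem_zpowers h)

theorem element_order_2q_p2_union_p3 (G : Type*) [Group G] [Finite G]
    (q r : ℕ) (hq : q.Prime) (hr : r.Prime) (h2q : 2 < q) (hqr : q < r)
    (h2d : 2 ∣ Nat.card G) (hqd : q ∣ Nat.card G) (hrd : r ∣ Nat.card G)
    (x : G) (hx : orderOf x = 2 * q) :
    HasInducedP2UnionP3 (powerGraph G) := by
  have : Fact r.Prime := ⟨hr⟩
  obtain ⟨c, hc⟩ : ∃ c : G, orderOf c = r := by
    have := Fintype.ofFinite G
    have hrd' : r ∣ Fintype.card G := by rwa [← Nat.card_eq_fintype_card]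
    exact exists_prime_orderOf_dvd_card r hrd'
  have hr2 : 2 < r := lt_trans h2q hqr
  have hcinv : orderOf c⁻¹ = r := by rw [orderOf_inv, hc]
  have hq0 : 0 < q := hq.pos
  have hxq : orderOf (x ^ q) = 2 := by
    rw [orderOf_pow, hx, Nat.gcd_eq_right ⟨2, by ring⟩, Nat.mul_div_cancel _ hq0]
  have hx2 : orderOf (x ^ 2) = q := by
    rw [orderOf_pow, hx, Nat.gcd_eq_right ⟨q, rfl⟩,
      Nat.mul_div_cancel_left _ (by norm_num)]
  -- divisibility facts
  have hr2' : ¬ r ∣ 2 := fun h => absurd (Nat.le_of_dvd (by norm_num) h) (by omega)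
  have hrq : ¬ r ∣ q := fun h => absurd ((Nat.prime_dvd_prime_iff_eq hr hq).mp h) (by omega)
  have hr2q : ¬ r ∣ 2 * q := fun h => by
    rcases (Nat.Prime.dvd_mul hr).mp h with h | h
    · exact hr2' h
    · exact hrq h
  have h2r : ¬ (2 : ℕ) ∣ r := fun h =>
    absurd ((Nat.prime_dvd_prime_iff_eq Nat.prime_two hr).mp h) (by omega)
  have hqr' : ¬ q ∣ r := fun h =>
    absurd ((Nat.prime_dvd_prime_iff_eq hq hr).mp h) (by omega)
  have h2qr : ¬ 2 * q ∣ r := fun h => h2r (dvd_trans ⟨q, rfl⟩ h)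
  have h2q' : ¬ (2 : ℕ) ∣ q := fun h =>
    absurd ((Nat.prime_dvd_prime_iff_eq Nat.prime_two hq).mp h) (by omega)
  have hq2 : ¬ q ∣ 2 := fun h => absurd (Nat.le_of_dvd (by norm_num) h) (by omega)
  refine ⟨c, c⁻¹, x ^ q, x, x ^ 2, ?_, ?_, ?_, ?_, ?_, ?_, ?_, ?_, ?_, ?_,
    ?_, ?_, ?_, ?_, ?_, ?_, ?_, ?_, ?_, ?_⟩
  · intro h
    have hc2 : c ^ 2 = 1 := by
      rw [pow_two]; nth_rewrite 1 [h]; exact inv_mul_cancel c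
    have := Nat.le_of_dvd (by norm_num) (hc ▸ orderOf_dvd_of_pow_eq_one hc2)
    omega
  · intro h; rw [h, hxq] at hc; omega
  · intro h; rw [h, hx] at hc; omega
  · intro h; rw [h, hx2] at hc; omega
  · intro h; rw [h, hxq] at hcinv; omega
  · intro h; rw [h, hx] at hcinv; omega
  · intro h; rw [h, hx2] at hcinv; omega
  · intro h; rw [h, hx] at hxq; omega
  · intro h; rw [h, hx2] at hxq; omega
  · intro h; rw [← h, hx] at hx2; omega
  · exact ⟨fun h => by
      have hc2 : c ^ 2 = 1 := by
        rw [pow_two]; nth_rewrite 1 [h]; exact inv_mul_cancel c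
      have := Nat.le_of_dvd (by norm_num) (hc ▸ orderOf_dvd_of_pow_eq_one hc2)
      omega,
      Or.inl ⟨-1, by simp⟩⟩
  · exact ⟨fun h => by rw [h, hx] at hxq; omega, Or.inl ⟨(q : ℤ), by simp⟩⟩
  · exact ⟨fun h => by rw [← h, hx] at hx2; omega, Or.inr ⟨(2 : ℤ), by show x ^ (2:ℤ) = x ^ 2; rw [zpow_two, pow_two]⟩⟩
  · exact notAdj_of_orders (by rw [hc, hxq]; exact hr2') (by rw [hc, hxq]; exact h2r)
  · exact notAdj_of_orders (by rw [hc, hx]; exact hr2q) (by rw [hc, hx]; exact h2qr)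
  · exact notAdj_of_orders (by rw [hc, hx2]; exact hrq) (by rw [hc, hx2]; exact hqr')
  · exact notAdj_of_orders (by rw [hcinv, hxq]; exact hr2') (by rw [hcinv, hxq]; exact h2r)
  · exact notAdj_of_orders (by rw [hcinv, hx]; exact hr2q) (by rw [hcinv, hx]; exact h2qr)
  · exact notAdj_of_orders (by rw [hcinv, hx2]; exact hrq) (by rw [hcinv, hx2]; exact hqr')
  · exact notAdj_of_orders (by rw [hxq, hx2]; exact h2q') (by rw [hxq, hx2]; exact hq2)
end
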